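/- arXiv:math/0612364 — 5 statements merged into one kernel-verified Lean document; each statement's English description precedes it below -/
import Mathlib

section
/- Let m ≥ 1 and let x_1, …, x_n be a finite sequence taking values in the ordered alphabet {1, …, m}. With a^r_k denoting the number of indices 1 ≤ i ≤ k with x_i = r (and a^r_0 = 0), the length LI_n of the longest weakly increasing subsequence of x_1, …, x_n equals the maximum, over all integers 0 = k_0 ≤ k_1 ≤ k_2 ≤ ⋯ ≤ k_{m−1} ≤ k_m = n, of the sum ∑_{r=1}^{m} (a^r_{k_r} − a^r_{k_{r−1}}). -/
/-- The length of the longest weakly increasing subsequence of a list of naturals. -/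
noncomputable def LIS (l : List ℕ) : ℕ :=
  sSup {k | ∃ s : List ℕ, s.Sublist l ∧ s.Pairwise (· ≤ ·) ∧ s.length = k}

/-- `cnt x r k` is the number of indices `1 ≤ i ≤ k` with `x i = r`. -/
def cnt (x : ℕ → ℕ) (r k : ℕ) : ℕ :=
  ((Finset.Icc 1 k).filter fun i => x i = r).card

lemma cnt_eq_Ioc (x : ℕ → ℕ) (r t : ℕ) :
    cnt x r t = ((Finset.Ioc 0 t).filter fun i => x i = r).card := by
  rw [cnt, ← Finset.Icc_add_one_left_eq_Ioc, zero_add]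

lemma cnt_diff (x : ℕ → ℕ) (r a b : ℕ) (hab : a ≤ b) :
    cnt x r b - cnt x r a = ((Finset.Ioc a b).filter fun i => x i = r).card := by
  rw [cnt_eq_Ioc, cnt_eq_Ioc]
  have h := Finset.Ioc_union_Ioc_eq_Ioc (Nat.zero_le a) hab
  have hd : Disjoint ((Finset.Ioc 0 a).filter fun i => x i = r)
      ((Finset.Ioc a b).filter fun i => x i = r) := by
    rw [Finset.disjoint_left]
    intro i hi hj
    simp only [Finset.mem_filter, Finset.mem_Ioc] at hi hj
    omega
  rw [← h, Finset.filter_union, Finset.card_union_of_disjoint hd]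
  omega

lemma kmono {m : ℕ} {k : ℕ → ℕ} (h : ∀ r < m, k r ≤ k (r + 1)) :
    ∀ a b, a ≤ b → b ≤ m → k a ≤ k b := by
  intro a b hab hbm
  induction b with
  | zero => obtain rfl : a = 0 := Nat.le_zero.mp hab; exact le_rfl
  | succ b ih =>
    by_cases hc : a = b + 1
    · subst hc; exact le_rfl
    · exact (ih (by omega) (by omega)).trans (h b (by omega))

lemma sum_filter_length (m : ℕ) (x : ℕ → ℕ) :
    ∀ t : List ℕ, (∀ i ∈ t, x i ∈ Finset.Icc 1 m) →
      (∑ r ∈ Finset.Icc 1 m, (t.filter fun i => decide (x i = r)).length) = t.length := by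
  intro t ht
  induction t with
  | nil => simp
  | cons a t ih =>
    have ha := Finset.mem_Icc.mp (ht a (List.mem_cons_self (a := a) (l := t)))
    have ih' := ih fun i hi => ht i (List.mem_cons_of_mem a hi)
    have hterm : ∀ r, ((a :: t).filter fun i => decide (x i = r)).length
        = (if x a = r then 1 else 0) + (t.filter fun i => decide (x i = r)).length := by
      intro r
      by_cases h : x a = r <;> simp [List.filter_cons, h, Nat.add_comm]
    rw [Finset.sum_congr rfl fun r _ => hterm r, Finset.sum_add_distrib, ih',
      Finset.sum_ite_eq]
    simp [Finset.mem_Icc.mpr ha, Nat.add_comm]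

lemma chain_mem (m n : ℕ) (hm : 1 ≤ m) (x : ℕ → ℕ)
    (hx : ∀ i, 1 ≤ i → i ≤ n → x i ∈ Finset.Icc 1 m)
    (k : ℕ → ℕ) (hk0 : k 0 = 0) (hkm : k m = n) (hkstep : ∀ r < m, k r ≤ k (r + 1)) :
    ∃ s : List ℕ, s.Sublist ((List.range' 1 n).map x) ∧ s.Pairwise (· ≤ ·) ∧
      s.length = ∑ r ∈ Finset.Icc 1 m, (cnt x r (k r) - cnt x r (k (r - 1))) := by
  classical
  have hkm' : ∀ a b, a ≤ b → b ≤ m → k a ≤ k b := kmono hkstep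
  set L : ℕ → ℕ := fun i => sInf {r | i ≤ k r} with hLdef
  have hLle : ∀ i, i ≤ n → i ≤ k (L i) := fun i h2 =>
    Nat.sInf_mem (⟨m, show i ≤ k m by omega⟩ : {r | i ≤ k r}.Nonempty)
  have hLub : ∀ i, i ≤ n → L i ≤ m := fun i h2 => Nat.sInf_le (show i ≤ k m by omega)
  have hL1 : ∀ i, 1 ≤ i → i ≤ n → 1 ≤ L i := by
    intro i h1 h2
    by_contra h
    have h0 : L i = 0 := by omega
    have := hLle i h2
    rw [h0, hk0] at this; omega
  have hLiff : ∀ i r, 1 ≤ i → i ≤ n → 1 ≤ r → r ≤ m →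
      (L i = r ↔ k (r - 1) < i ∧ i ≤ k r) := by
    intro i r h1 h2 hr1 hr2
    constructor
    · intro h
      refine ⟨?_, h ▸ hLle i h2⟩
      by_contra h'
      push_neg at h'
      have : L i ≤ r - 1 := Nat.sInf_le h'
      omega
    · rintro ⟨ha, hb⟩
      have h3 : L i ≤ r := Nat.sInf_le hb
      by_contra h'
      have h4 : L i ≤ r - 1 := by omega
      have := (hLle i h2).trans (hkm' (L i) (r - 1) h4 (by omega))
      omega
  have hLmono : ∀ i j, i ≤ j → j ≤ n → L i ≤ L j := fun i j hij h2 =>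
    Nat.sInf_le (show i ≤ k (L j) from hij.trans (hLle j h2))
  set tl : List ℕ := (List.range' 1 n).filter (fun i => decide (x i = L i)) with htldef
  have htl_sub : tl.Sublist (List.range' 1 n) := List.filter_sublist
  have htlmem : ∀ i ∈ tl, (1 ≤ i ∧ i ≤ n) ∧ x i = L i := by
    intro i hi
    rw [htldef, List.mem_filter, List.mem_range'_1, decide_eq_true_eq] at hi
    exact ⟨⟨hi.1.1, by omega⟩, hi.2⟩
  have hpw : tl.Pairwise (· < ·) :=
    List.Pairwise.sublist htl_sub (List.pairwise_lt_range' (s := 1) (n := n))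
  have hnd : tl.Nodup := hpw.imp (fun h => Nat.ne_of_lt h)
  refine ⟨tl.map x, htl_sub.map x, ?_, ?_⟩
  · rw [List.pairwise_map]
    refine hpw.imp_of_mem ?_
    intro a b ha hb hab
    have h1 := htlmem a ha; have h2 := htlmem b hb
    rw [h1.2, h2.2]
    exact hLmono a b (le_of_lt hab) h2.1.2
  · rw [List.length_map]
    have h1 : tl.toFinset = (Finset.Ioc 0 n).filter fun i => x i = L i := by
      ext i
      simp only [List.mem_toFinset, htldef, List.mem_filter, List.mem_range'_1,
        decide_eq_true_eq, Finset.mem_filter, Finset.mem_Ioc]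
      omega
    have h2 : ((Finset.Ioc 0 n).filter fun i => x i = L i)
        = (Finset.Icc 1 m).biUnion
          fun r => (Finset.Ioc (k (r - 1)) (k r)).filter fun i => x i = r := by
      ext i
      simp only [Finset.mem_filter, Finset.mem_Ioc, Finset.mem_biUnion, Finset.mem_Icc]
      constructor
      · rintro ⟨⟨hi0, hin⟩, hxi⟩
        have hr1 := hL1 i hi0 hin
        have hr2 := hLub i hin
        exact ⟨L i, ⟨hr1, hr2⟩, (hLiff i (L i) hi0 hin hr1 hr2).mp rfl, hxi⟩
      · rintro ⟨r, ⟨hr1, hr2⟩, ⟨ha, hb⟩, hxi⟩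
        have hi0 : 1 ≤ i := by omega
        have hin : i ≤ n := hb.trans (by have := hkm' r m hr2 le_rfl; omega)
        have := (hLiff i r hi0 hin hr1 hr2).mpr ⟨ha, hb⟩
        exact ⟨⟨hi0, hin⟩, by omega⟩
    rw [← List.toFinset_card_of_nodup hnd, h1, h2, Finset.card_biUnion]
    · refine Finset.sum_congr rfl ?_
      intro r hr
      rw [Finset.mem_Icc] at hr
      exact (cnt_diff x r (k (r - 1)) (k r) (hkm' (r - 1) r (by omega) hr.2)).symm
    · intro r hr s hs hrs
      rw [Function.onFun, Finset.disjoint_left]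
      intro i hi hj
      simp only [Finset.mem_filter] at hi hj
      omega

lemma sub_le_chain (m n : ℕ) (hm : 1 ≤ m) (x : ℕ → ℕ)
    (hx : ∀ i, 1 ≤ i → i ≤ n → x i ∈ Finset.Icc 1 m)
    (s : List ℕ) (hsub : s.Sublist ((List.range' 1 n).map x)) (hsort : s.Pairwise (· ≤ ·)) :
    ∃ k : ℕ → ℕ, k 0 = 0 ∧ k m = n ∧ (∀ r < m, k r ≤ k (r + 1)) ∧
      s.length ≤ ∑ r ∈ Finset.Icc 1 m, (cnt x r (k r) - cnt x r (k (r - 1))) := by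
  classical
  obtain ⟨t, htsub, rfl⟩ := List.sublist_map_iff.mp hsub
  have htmem : ∀ i ∈ t, 1 ≤ i ∧ i ≤ n := by
    intro i hi
    have := List.mem_range'_1.mp (htsub.subset hi)
    omega
  have htx : ∀ i ∈ t, 1 ≤ x i ∧ x i ≤ m := by
    intro i hi
    have h := htmem i hi
    exact Finset.mem_Icc.mp (hx i h.1 h.2)
  have hpw : t.Pairwise (· < ·) := List.Pairwise.sublist htsub (List.pairwise_lt_range' (s := 1) (n := n))
  have hnd : t.Nodup := hpw.imp fun h => Nat.ne_of_lt h
  have hspw : t.Pairwise fun a b => x a ≤ x b := List.pairwise_map.mp hsort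
  have hR : ∀ i ∈ t, ∀ j ∈ t, x j < x i → j < i := by
    have hsym : Symmetric fun a b => ((a < b → x a ≤ x b) ∧ (b < a → x b ≤ x a)) :=
      fun a b h => ⟨h.2, h.1⟩
    have hPR : t.Pairwise fun a b => ((a < b → x a ≤ x b) ∧ (b < a → x b ≤ x a)) :=
      (hpw.and hspw).imp fun {a b} h => ⟨fun _ => h.2, fun hba => absurd h.1 (by omega)⟩
    intro i hi j hj hxx
    by_cases hij : j = i
    · subst hij; omega
    · obtain ⟨h1, h2⟩ := (haveI : Std.Symm (fun a b => ((a < b → x a ≤ x b) ∧ (b < a → x b ≤ x a))) := ⟨fun a b h => hsym h⟩; hPR.forall hj hi hij)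
      by_cases hji : j < i
      · exact hji
      · have hlt : i < j := by omega
        have := h2 hlt
        omega
  set k : ℕ → ℕ := fun r => if m ≤ r then n else (t.toFinset.filter fun i => x i ≤ r).sup id
    with hkdef
  have hk0 : k 0 = 0 := by
    simp only [hkdef]
    rw [if_neg (by omega)]
    apply Nat.le_antisymm _ (Nat.zero_le _)
    apply Finset.sup_le
    intro i hi
    simp only [Finset.mem_filter, List.mem_toFinset] at hi
    have := htx i hi.1
    omega
  have hkm : k m = n := by simp only [hkdef]; rw [if_pos le_rfl]
  have hsupn : ∀ r, (t.toFinset.filter fun i => x i ≤ r).sup id ≤ n := by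
    intro r
    apply Finset.sup_le
    intro i hi
    simp only [Finset.mem_filter, List.mem_toFinset] at hi
    exact (htmem i hi.1).2
  have hkstep : ∀ r < m, k r ≤ k (r + 1) := by
    intro r hr
    simp only [hkdef]
    rw [if_neg (by omega)]
    by_cases h2 : m ≤ r + 1
    · rw [if_pos h2]; exact hsupn r
    · rw [if_neg h2]
      apply Finset.sup_mono
      intro i hi
      simp only [Finset.mem_filter, List.mem_toFinset] at hi ⊢
      exact ⟨hi.1, hi.2.trans (by omega)⟩
  have hkm' := kmono hkstep
  have hkey : ∀ r, 1 ≤ r → r ≤ m → ∀ i ∈ t, x i = r → k (r - 1) < i ∧ i ≤ k r := by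
    intro r hr1 hr2 i hi hxi
    have him := htmem i hi
    constructor
    · have hne : ¬ m ≤ r - 1 := by omega
      simp only [hkdef]
      rw [if_neg hne, Finset.sup_lt_iff (show (⊥ : ℕ) < i from him.1)]
      intro j hj
      simp only [Finset.mem_filter, List.mem_toFinset] at hj
      exact hR i hi j hj.1 (by omega)
    · by_cases h2 : m ≤ r
      · simp only [hkdef]; rw [if_pos h2]; exact him.2
      · simp only [hkdef]; rw [if_neg h2]
        exact Finset.le_sup (f := id)
          (by simp only [Finset.mem_filter, List.mem_toFinset]; exact ⟨hi, by omega⟩)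
  refine ⟨k, hk0, hkm, hkstep, ?_⟩
  rw [List.length_map]
  rw [← sum_filter_length m x t (fun i hi => Finset.mem_Icc.mpr (htx i hi))]
  apply Finset.sum_le_sum
  intro r hr
  rw [Finset.mem_Icc] at hr
  rw [cnt_diff x r (k (r - 1)) (k r) (hkm' (r - 1) r (by omega) hr.2)]
  have hfnd : (t.filter fun i => decide (x i = r)).Nodup := hnd.filter _
  rw [← List.toFinset_card_of_nodup hfnd]
  apply Finset.card_le_card
  intro i hi
  rw [List.mem_toFinset, List.mem_filter, decide_eq_true_eq] at hi
  have := hkey r hr.1 hr.2 i hi.1 hi.2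
  simp only [Finset.mem_filter, Finset.mem_Ioc]
  exact ⟨this, hi.2⟩

/-- for a sequence `x 1, …, x n` with values in `{1, …, m}`, the length of the
longest weakly increasing subsequence equals the maximum over chains
`0 = k_0 ≤ k_1 ≤ ⋯ ≤ k_m = n` of `∑_{r=1}^m (a^r_{k_r} − a^r_{k_{r−1}})`. -/
theorem stmt0 (m n : ℕ) (hm : 1 ≤ m) (x : ℕ → ℕ)
    (hx : ∀ i, 1 ≤ i → i ≤ n → x i ∈ Finset.Icc 1 m) :
    LIS ((List.range' 1 n).map x) =
      sSup {S : ℕ | ∃ k : ℕ → ℕ, k 0 = 0 ∧ k m = n ∧ (∀ r < m, k r ≤ k (r + 1)) ∧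
        S = ∑ r ∈ Finset.Icc 1 m, (cnt x r (k r) - cnt x r (k (r - 1)))} := by
  unfold LIS
  set A : Set ℕ := {k | ∃ s : List ℕ, s.Sublist ((List.range' 1 n).map x) ∧
    s.Pairwise (· ≤ ·) ∧ s.length = k} with hA
  set B : Set ℕ := {S : ℕ | ∃ k : ℕ → ℕ, k 0 = 0 ∧ k m = n ∧ (∀ r < m, k r ≤ k (r + 1)) ∧
    S = ∑ r ∈ Finset.Icc 1 m, (cnt x r (k r) - cnt x r (k (r - 1)))} with hB
  have hAbdd : BddAbove A := by
    refine ⟨n, fun a ha => ?_⟩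
    obtain ⟨s, hs, _, hl⟩ := ha
    have h := hs.length_le
    rw [List.length_map, List.length_range'] at h
    omega
  have hAne : A.Nonempty := ⟨0, [], List.nil_sublist _, List.Pairwise.nil, rfl⟩
  have hBA : B ⊆ A := by
    rintro S ⟨k, hk0, hkm, hkstep, rfl⟩
    obtain ⟨s, h1, h2, h3⟩ := chain_mem m n hm x hx k hk0 hkm hkstep
    exact ⟨s, h1, h2, h3⟩
  have hBbdd : BddAbove B := hAbdd.mono hBA
  have hBne : B.Nonempty := by
    refine ⟨_, fun r => if r = 0 then 0 else n, by simp, by show (if m = 0 then 0 else n) = n; rw [if_neg (by omega)], ?_, rfl⟩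
    intro r hr
    by_cases h : r = 0 <;> simp [h]
  apply le_antisymm
  · refine csSup_le hAne fun a ha => ?_
    obtain ⟨s, hsub, hsort, rfl⟩ := ha
    obtain ⟨k, hk0, hkm, hkstep, hle⟩ := sub_le_chain m n hm x hx s hsub hsort
    exact hle.trans (le_csSup hBbdd ⟨k, hk0, hkm, hkstep, rfl⟩)
  · exact csSup_le_csSup hAbdd hBne hBA
end

section
/- Let m ≥ 1 and let x_1, …, x_n be a finite sequence taking values in the ordered alphabet {1, …, m}. With a^r_k the number of indices 1 ≤ i ≤ k with x_i = r, and S^r_k := a^r_k − a^{r+1}_k for 1 ≤ r ≤ m−1 and 0 ≤ k ≤ n, the length LI_n of the longest weakly increasing subsequence satisfies LI_n = max over all integers 0 ≤ k_1 ≤ k_2 ≤ ⋯ ≤ k_{m−1} ≤ n of (S^1_{k_1} + S^2_{k_2} + ⋯ + S^{m−1}_{k_{m−1}} + a^m_n). -/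
/-- `Scnt x r k = a^r_k − a^{r+1}_k` (as an integer). -/
def Scnt (x : ℕ → ℕ) (r k : ℕ) : ℤ :=
  (cnt x r k : ℤ) - (cnt x (r + 1) k : ℤ)

lemma cnt_zero (x : ℕ → ℕ) (r : ℕ) : cnt x r 0 = 0 := by simp [cnt]

lemma cnt_split (x : ℕ → ℕ) (r a b : ℕ) (hab : a ≤ b) :
    cnt x r b = cnt x r a + ((Finset.Ioc a b).filter fun i => x i = r).card := by
  classical
  have h : Finset.Icc 1 b = Finset.Icc 1 a ∪ Finset.Ioc a b := by
    ext i; simp only [Finset.mem_Icc, Finset.mem_union, Finset.mem_Ioc]; omega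
  rw [cnt, h, Finset.filter_union, Finset.card_union_of_disjoint, cnt]
  refine Finset.disjoint_left.mpr ?_
  intro i hi hi'
  simp only [Finset.mem_filter, Finset.mem_Icc, Finset.mem_Ioc] at hi hi'
  omega

lemma filter_range'_length (n : ℕ) (Q : ℕ → Prop) [DecidablePred Q] :
    ((List.range' 1 n).filter (fun i => decide (Q i))).length
      = ((Finset.Icc 1 n).filter Q).card := by
  rw [Nat.Icc_eq_range']
  simp [Finset.filter, Multiset.filter_coe]

lemma telescope (m n : ℕ) (hm : 1 ≤ m) (x : ℕ → ℕ) (K : ℕ → ℕ)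
    (hK0 : K 0 = 0) (hKm : K m = n) :
    ∑ r ∈ Finset.Icc 1 m, ((cnt x r (K r) : ℤ) - (cnt x r (K (r - 1)) : ℤ))
      = (∑ r ∈ Finset.Icc 1 (m - 1), Scnt x r (K r)) + (cnt x m n : ℤ) := by
  have e : ∀ (M : ℕ) (f : ℕ → ℤ),
      ∑ r ∈ Finset.Icc 1 M, f r = ∑ i ∈ Finset.range M, f (1 + i) := by
    intro M f
    rw [← Finset.Ico_add_one_right_eq_Icc, Finset.sum_Ico_eq_sum_range]
    simp
  rw [e, e]
  have hsplit : ∑ i ∈ Finset.range m, ((cnt x (1 + i) (K (1 + i)) : ℤ) - (cnt x (1 + i) (K (1 + i - 1)) : ℤ))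
      = (∑ i ∈ Finset.range m, (cnt x (1 + i) (K (1 + i)) : ℤ))
        - ∑ i ∈ Finset.range m, (cnt x (1 + i) (K i) : ℤ) := by
    rw [← Finset.sum_sub_distrib]
    refine Finset.sum_congr rfl fun i _ => by norm_num
  rw [hsplit]
  obtain ⟨m', rfl⟩ : ∃ m', m = m' + 1 := ⟨m - 1, by omega⟩
  rw [Finset.sum_range_succ, Finset.sum_range_succ']
  have h0 : (cnt x (1 + 0) (K 0) : ℤ) = 0 := by rw [hK0, cnt_zero]; norm_num
  rw [h0, add_zero]
  have hm' : 1 + m' = m' + 1 := by omega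
  rw [hm', hKm]
  simp only [Nat.add_sub_cancel]
  have hAB : (∑ i ∈ Finset.range m', (cnt x (1 + i) (K (1 + i)) : ℤ))
      - ∑ i ∈ Finset.range m', (cnt x (1 + (i + 1)) (K (i + 1)) : ℤ)
      = ∑ i ∈ Finset.range m', Scnt x (1 + i) (K (1 + i)) := by
    rw [← Finset.sum_sub_distrib]
    refine Finset.sum_congr rfl fun i _ => ?_
    have h : 1 + (i + 1) = (1 + i) + 1 := by omega
    have h2 : i + 1 = 1 + i := by omega
    rw [h, h2, Scnt]
  linarith [hAB]

lemma partition_card (m n : ℕ) (x : ℕ → ℕ)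
    (hx : ∀ i, 1 ≤ i → i ≤ n → x i ∈ Finset.Icc 1 m)
    (K : ℕ → ℕ) (hmono : Monotone K) (hKm : K m = n) :
    ((Finset.Icc 1 n).filter (fun i => K (x i - 1) < i ∧ i ≤ K (x i))).card
      = ∑ r ∈ Finset.Icc 1 m, ((Finset.Ioc (K (r - 1)) (K r)).filter (fun i => x i = r)).card := by
  classical
  rw [← Finset.card_biUnion]
  · congr 1
    ext i
    simp only [Finset.mem_filter, Finset.mem_biUnion, Finset.mem_Icc, Finset.mem_Ioc]
    constructor
    · rintro ⟨⟨h1, h2⟩, h3, h4⟩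
      have hxi := hx i h1 h2
      rw [Finset.mem_Icc] at hxi
      exact ⟨x i, hxi, ⟨h3, h4⟩, rfl⟩
    · rintro ⟨r, ⟨hr1, hr2⟩, ⟨h3, h4⟩, h5⟩
      subst h5
      refine ⟨⟨by omega, h4.trans ((hmono hr2).trans_eq hKm)⟩, h3, h4⟩
  · intro r hr s hs hrs
    refine Finset.disjoint_left.mpr ?_
    intro a ha hb
    simp only [Finset.mem_filter] at ha hb
    have := ha.2; have := hb.2
    omega

lemma construct (m n : ℕ) (hm : 1 ≤ m) (x : ℕ → ℕ)
    (hx : ∀ i, 1 ≤ i → i ≤ n → x i ∈ Finset.Icc 1 m)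
    (K : ℕ → ℕ) (hmono : Monotone K) (hK0 : K 0 = 0) (hKm : K m = n) :
    ∃ s : List ℕ, s.Sublist ((List.range' 1 n).map x) ∧ s.Pairwise (· ≤ ·) ∧
      (s.length : ℤ) = (∑ r ∈ Finset.Icc 1 (m - 1), Scnt x r (K r)) + (cnt x m n : ℤ) := by
  classical
  set t := (List.range' 1 n).filter (fun i => decide (K (x i - 1) < i ∧ i ≤ K (x i))) with ht
  have hts : t.Sublist (List.range' 1 n) := List.filter_sublist
  have hpt : t.Pairwise (· < ·) := (List.pairwise_lt_range').sublist hts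
  have hmem : ∀ i ∈ t, K (x i - 1) < i ∧ i ≤ K (x i) := by
    intro i hi
    have := List.of_mem_filter hi
    simpa using this
  refine ⟨t.map x, hts.map x, ?_, ?_⟩
  · rw [List.pairwise_map]
    refine List.Pairwise.imp_of_mem ?_ hpt
    intro a b ha hb hab
    by_contra hcon
    push_neg at hcon
    have h1 : K (x b) ≤ K (x a - 1) := hmono (by omega)
    have h2 := (hmem b hb).2
    have h3 := (hmem a ha).1
    omega
  · rw [List.length_map, ht, filter_range'_length,
      partition_card m n x hx K hmono hKm, ← telescope m n hm x K hK0 hKm]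
    push_cast
    refine Finset.sum_congr rfl fun r hr => ?_
    have h : K (r - 1) ≤ K r := hmono (by omega)
    have := cnt_split x r (K (r - 1)) (K r) h
    push_cast [this]
    ring

lemma bound (m n : ℕ) (hm : 1 ≤ m) (x : ℕ → ℕ)
    (hx : ∀ i, 1 ≤ i → i ≤ n → x i ∈ Finset.Icc 1 m)
    (t : List ℕ) (ht : t.Sublist (List.range' 1 n)) (hs : (t.map x).Pairwise (· ≤ ·)) :
    ∃ k : ℕ → ℕ, Monotone k ∧ k (m - 1) ≤ n ∧
      (t.length : ℤ) ≤ (∑ r ∈ Finset.Icc 1 (m - 1), Scnt x r (k r)) + (cnt x m n : ℤ) := by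
  classical
  have hmemt : ∀ i ∈ t, 1 ≤ i ∧ i ≤ n := by
    intro i hi
    have := List.mem_range'_1.mp (ht.mem hi)
    omega
  have hpt : t.Pairwise (· < ·) := (List.pairwise_lt_range').sublist ht
  have hnd : t.Nodup := hpt.imp (fun h => Nat.ne_of_lt h)
  set T := t.toFinset with hT
  have hcardT : T.card = t.length := List.toFinset_card_of_nodup hnd
  set kk : ℕ → ℕ := fun r => (T.filter (fun j => x j ≤ r)).sup id with hkk
  have hkkmono : Monotone kk := fun a b hab =>
    Finset.sup_mono (Finset.monotone_filter_right T (fun j _ hj => le_trans hj hab))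
  have hkkn : ∀ r, kk r ≤ n :=
    fun r => Finset.sup_le (fun j hj =>
      (hmemt j (List.mem_toFinset.mp (Finset.mem_filter.mp hj).1)).2)
  set K : ℕ → ℕ := fun r => if r ≤ m - 1 then kk r else n with hK
  have hKmono : Monotone K := by
    intro a b hab
    simp only [hK]
    split_ifs with h1 h2 h2
    · exact hkkmono hab
    · exact hkkn a
    · omega
    · exact le_refl n
  have hK0 : K 0 = 0 := by
    have hempty : T.filter (fun j => x j ≤ 0) = ∅ := by
      refine Finset.filter_eq_empty_iff.mpr ?_
      intro j hj
      have h1 := hmemt j (List.mem_toFinset.mp hj)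
      have h2 := hx j h1.1 h1.2
      rw [Finset.mem_Icc] at h2
      omega
    simp only [hK, hkk]
    rw [if_pos (Nat.zero_le _), hempty, Finset.sup_empty]
    rfl
  have hKm : K m = n := by
    simp only [hK]
    rw [if_neg (by omega)]
  have hforall : ∀ a ∈ t, ∀ b ∈ t, a ≠ b →
      (a < b ∧ x a ≤ x b) ∨ (b < a ∧ x b ≤ x a) := by
    have hboth : t.Pairwise (fun a b => a < b ∧ x a ≤ x b) :=
      hpt.and (List.pairwise_map.mp hs)
    have hsym : Symmetric (fun a b : ℕ => (a < b ∧ x a ≤ x b) ∨ (b < a ∧ x b ≤ x a)) :=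
      fun a b h => h.elim (fun h => Or.inr h) (fun h => Or.inl h)
    intro a ha b hb hab
    haveI : Std.Symm (fun a b : ℕ => (a < b ∧ x a ≤ x b) ∨ (b < a ∧ x b ≤ x a)) := ⟨hsym⟩
    exact List.Pairwise.forall (R := fun a b : ℕ => (a < b ∧ x a ≤ x b) ∨ (b < a ∧ x b ≤ x a)) (hboth.imp (fun h => Or.inl h)) ha hb hab
  have hsub : ∀ r, 1 ≤ r → r ≤ m →
      T.filter (fun i => x i = r) ⊆ (Finset.Ioc (K (r - 1)) (K r)).filter (fun i => x i = r) := by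
    intro r hr1 hr2 i hi
    rw [Finset.mem_filter] at hi ⊢
    obtain ⟨hiT, hxi⟩ := hi
    have hit : i ∈ t := List.mem_toFinset.mp hiT
    have hin := hmemt i hit
    refine ⟨Finset.mem_Ioc.mpr ⟨?_, ?_⟩, hxi⟩
    · simp only [hK]
      rw [if_pos (by omega : r - 1 ≤ m - 1)]
      refine (Finset.sup_lt_iff (show (⊥ : ℕ) < i from hin.1)).mpr ?_
      intro j hj
      rw [Finset.mem_filter] at hj
      have hjt := List.mem_toFinset.mp hj.1
      have hji : j ≠ i := fun h => by subst h; omega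
      have hor := hforall j hjt i hit hji
      show j < i
      omega
    · simp only [hK]
      split_ifs with h
      · exact Finset.le_sup (f := id) (Finset.mem_filter.mpr ⟨hiT, by omega⟩)
      · exact hin.2
  have hdisj : ∀ r ∈ Finset.Icc 1 m, ∀ s ∈ Finset.Icc 1 m, r ≠ s →
      Disjoint (T.filter (fun i => x i = r)) (T.filter (fun i => x i = s)) := by
    intro r _ s _ hrs
    refine Finset.disjoint_left.mpr ?_
    intro a ha hb
    rw [Finset.mem_filter] at ha hb
    have := ha.2; have := hb.2
    omega
  have hpartition : T = (Finset.Icc 1 m).biUnion (fun r => T.filter (fun i => x i = r)) := by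
    ext i
    simp only [Finset.mem_biUnion, Finset.mem_filter, Finset.mem_Icc]
    constructor
    · intro hi
      have h1 := hmemt i (List.mem_toFinset.mp hi)
      have h2 := hx i h1.1 h1.2
      rw [Finset.mem_Icc] at h2
      exact ⟨x i, h2, hi, rfl⟩
    · rintro ⟨r, _, hi, _⟩
      exact hi
  have hcard : t.length = ∑ r ∈ Finset.Icc 1 m, (T.filter (fun i => x i = r)).card := by
    rw [← hcardT]
    conv_lhs => rw [hpartition]
    exact Finset.card_biUnion hdisj
  refine ⟨K, hKmono, ?_, ?_⟩
  · simp only [hK]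
    rw [if_pos (le_refl _)]
    exact hkkn _
  · rw [← telescope m n hm x K hK0 hKm, hcard]
    push_cast
    refine Finset.sum_le_sum fun r hr => ?_
    rw [Finset.mem_Icc] at hr
    have hle : K (r - 1) ≤ K r := hKmono (by omega)
    have h1 : (T.filter (fun i => x i = r)).card
        ≤ ((Finset.Ioc (K (r - 1)) (K r)).filter (fun i => x i = r)).card :=
      Finset.card_le_card (hsub r hr.1 hr.2)
    have h2 := cnt_split x r (K (r - 1)) (K r) hle
    push_cast at h1 h2 ⊢
    omega

/-- `LI_n` equals the maximum over `0 ≤ k_1 ≤ ⋯ ≤ k_{m−1} ≤ n` of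
`S^1_{k_1} + ⋯ + S^{m−1}_{k_{m−1}} + a^m_n`. -/
theorem stmt1 (m n : ℕ) (hm : 1 ≤ m) (x : ℕ → ℕ)
    (hx : ∀ i, 1 ≤ i → i ≤ n → x i ∈ Finset.Icc 1 m) :
    (LIS ((List.range' 1 n).map x) : ℤ) =
      sSup {S : ℤ | ∃ k : ℕ → ℕ, Monotone k ∧ k (m - 1) ≤ n ∧
        S = (∑ r ∈ Finset.Icc 1 (m - 1), Scnt x r (k r)) + (cnt x m n : ℤ)} := by
  classical
  set l := (List.range' 1 n).map x with hl
  set A : Set ℕ := {k | ∃ s : List ℕ, s.Sublist l ∧ s.Pairwise (· ≤ ·) ∧ s.length = k} with hA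
  set B : Set ℤ := {S : ℤ | ∃ k : ℕ → ℕ, Monotone k ∧ k (m - 1) ≤ n ∧
        S = (∑ r ∈ Finset.Icc 1 (m - 1), Scnt x r (k r)) + (cnt x m n : ℤ)} with hB
  have hA_ne : A.Nonempty := ⟨0, [], List.nil_sublist _, List.Pairwise.nil, rfl⟩
  have hA_bdd : BddAbove A := by
    refine ⟨n, fun kk hkk => ?_⟩
    obtain ⟨s, hs1, _, hs3⟩ := hkk
    have := hs1.length_le
    simp only [hl, List.length_map, List.length_range'] at this
    omega
  have hLISA : LIS l = sSup A := rfl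
  have hLIS : LIS l ∈ A := hLISA ▸ Nat.sSup_mem hA_ne hA_bdd
  have hub : ∀ S ∈ B, S ≤ (LIS l : ℤ) := by
    rintro S ⟨k, hk1, hk2, rfl⟩
    set K : ℕ → ℕ := fun r => if r = 0 then 0 else if r ≤ m - 1 then k r else n with hKdef
    have hKmono : Monotone K := by
      intro a b hab
      by_cases ha0 : a = 0
      · subst ha0
        simp only [hKdef, if_pos rfl]
        exact Nat.zero_le _
      have hb0 : b ≠ 0 := by omega
      simp only [hKdef, if_neg ha0, if_neg hb0]
      split_ifs with h1 h2 h2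
      · exact hk1 hab
      · exact (hk1 h1).trans hk2
      · exact absurd (hab.trans h2) h1
      · exact le_refl n
    have hK0 : K 0 = 0 := by simp [hKdef]
    have hKm : K m = n := by
      simp only [hKdef]
      rw [if_neg (by omega), if_neg (by omega)]
    obtain ⟨s, hs1, hs2, hs3⟩ := construct m n hm x hx K hKmono hK0 hKm
    have hsum : ∑ r ∈ Finset.Icc 1 (m - 1), Scnt x r (K r)
        = ∑ r ∈ Finset.Icc 1 (m - 1), Scnt x r (k r) := by
      refine Finset.sum_congr rfl fun r hr => ?_
      rw [Finset.mem_Icc] at hr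
      simp only [hKdef]
      rw [if_neg (by omega), if_pos hr.2]
    rw [← hsum, ← hs3]
    have : s.length ∈ A := ⟨s, hs1, hs2, rfl⟩
    exact_mod_cast le_csSup hA_bdd this
  have hmemB : (LIS l : ℤ) ∈ B := by
    obtain ⟨s, hs1, hs2, hs3⟩ := hLIS
    obtain ⟨t, ht, rfl⟩ := List.sublist_map_iff.mp hs1
    obtain ⟨k, hk1, hk2, hk3⟩ := bound m n hm x hx t ht hs2
    have hSB : (∑ r ∈ Finset.Icc 1 (m - 1), Scnt x r (k r)) + (cnt x m n : ℤ) ∈ B :=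
      ⟨k, hk1, hk2, rfl⟩
    have h1 : (LIS l : ℤ) ≤ (∑ r ∈ Finset.Icc 1 (m - 1), Scnt x r (k r)) + (cnt x m n : ℤ) := by
      rw [← hs3]
      simpa using hk3
    have h2 := hub _ hSB
    have heq : (∑ r ∈ Finset.Icc 1 (m - 1), Scnt x r (k r)) + (cnt x m n : ℤ) = (LIS l : ℤ) :=
      le_antisymm h2 h1
    exact heq ▸ hSB
  exact le_antisymm (le_csSup ⟨_, hub⟩ hmemB) (csSup_le ⟨_, hmemB⟩ hub)
end

section
/- Let m ≥ 2, let f_1, …, f_{m−1} : [0,1] → ℝ be functions with f_i(0) = 0 for each i, and let β_1, …, β_{m−1}, η_1, …, η_{m−1} be real numbers with 0 ≤ β_i ≤ η_i for each i. Then, with the convention t_m := 1, the supremum over all 0 ≤ t_1 ≤ t_2 ≤ ⋯ ≤ t_{m−1} ≤ 1 of ∑_{i=1}^{m−1} (β_i·f_i(t_{i+1}) − η_i·f_i(t_i)) is nonnegative. -/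
/-- with `t_m := 1`, the supremum over `0 ≤ t_1 ≤ ⋯ ≤ t_{m−1} ≤ 1` of
`∑_{i=1}^{m−1} (β_i·f_i(t_{i+1}) − η_i·f_i(t_i))` is nonnegative, whenever `f_i(0) = 0`
and `0 ≤ β_i ≤ η_i`. -/
theorem stmt6 (m : ℕ) (hm : 2 ≤ m) (f : ℕ → ℝ → ℝ) (hf0 : ∀ i, f i 0 = 0)
    (β η : ℕ → ℝ) (hβ : ∀ i, 1 ≤ i → i ≤ m - 1 → 0 ≤ β i)
    (hβη : ∀ i, 1 ≤ i → i ≤ m - 1 → β i ≤ η i) :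
    0 ≤ sSup {v : ℝ | ∃ t : ℕ → ℝ, t m = 1 ∧ 0 ≤ t 1 ∧ (∀ i, 1 ≤ i → i < m → t i ≤ t (i + 1)) ∧
        v = ∑ i ∈ Finset.Icc 1 (m - 1), (β i * f i (t (i + 1)) - η i * f i (t i))} := by
  -- build t from the top down
  set g : ℕ → ℝ := fun k =>
    Nat.rec (motive := fun _ => ℝ) 1 (fun k gk => if f (m - (k + 1)) gk < 0 then gk else 0) k
    with hg
  have hg0 : g 0 = 1 := rfl
  have hgs : ∀ k, g (k + 1) = if f (m - (k + 1)) (g k) < 0 then g k else 0 := fun k => rfl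
  have hgnn : ∀ k, 0 ≤ g k := by
    intro k
    induction k with
    | zero => norm_num [hg0]
    | succ k ih => rw [hgs]; split <;> [exact ih; exact le_rfl]
  have hgmono : ∀ k, g (k + 1) ≤ g k := by
    intro k
    rw [hgs]; split <;> [exact le_rfl; exact hgnn k]
  set t : ℕ → ℝ := fun i => g (m - i) with ht
  have htm : t m = 1 := by simp [ht, hg0]
  have ht1 : 0 ≤ t 1 := hgnn _
  have htmono : ∀ i, 1 ≤ i → i < m → t i ≤ t (i + 1) := by
    intro i _ him
    have h1 : m - i = (m - (i + 1)) + 1 := by omega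
    simp only [ht, h1]
    exact hgmono _
  apply Real.sSup_nonneg'
  refine ⟨_, ⟨t, htm, ht1, htmono, rfl⟩, ?_⟩
  apply Finset.sum_nonneg
  intro i hi
  rw [Finset.mem_Icc] at hi
  obtain ⟨hi1, hi2⟩ := hi
  have him : i < m := by omega
  have h1 : m - i = (m - (i + 1)) + 1 := by omega
  have h2 : m - ((m - (i + 1)) + 1) = i := by omega
  have hti : t i = if f i (t (i + 1)) < 0 then t (i + 1) else 0 := by
    simp only [ht, h1, hgs, h2]
  by_cases hc : f i (t (i + 1)) < 0
  · rw [hti, if_pos hc]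
    have : β i * f i (t (i + 1)) - η i * f i (t (i + 1)) =
        (β i - η i) * f i (t (i + 1)) := by ring
    rw [this]
    nlinarith [hβη i hi1 hi2, hc.le]
  · rw [hti, if_neg hc, hf0, mul_zero, sub_zero]
    exact mul_nonneg (hβ i hi1 hi2) (not_lt.1 hc)
end

section
/- Let m ≥ 2 and let 0 = t_0 ≤ t_1 ≤ ⋯ ≤ t_{m−1} ≤ t_m = 1 and 0 = s_0 ≤ s_1 ≤ ⋯ ≤ s_{m−1} ≤ s_m = 1 be two points of the Weyl chamber. Then ∑_{i=1}^{m−1} [ (i/(i+1))·min(t_{i+1}, s_{i+1}) − min(t_{i+1}, s_i) − min(t_i, s_{i+1}) + ((i+1)/i)·min(t_i, s_i) ] = −1/m + ∑_{i=1}^{m} Leb([t_{i−1}, t_i] ∩ [s_{i−1}, s_i]), where Leb denotes Lebesgue measure on ℝ. -/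
open MeasureTheory

lemma vol_eq (a b c d : ℝ) (hab : a ≤ b) (hcd : c ≤ d) :
    (volume (Set.Icc a b ∩ Set.Icc c d)).toReal
      = min b d - min b c - min a d + min a c := by
  rw [Set.Icc_inter_Icc, Real.volume_Icc, ENNReal.toReal_ofReal']
  rcases le_total a c with h1 | h1 <;> rcases le_total b d with h2 | h2 <;>
    rcases le_total b c with h3 | h3 <;> rcases le_total a d with h4 | h4 <;>
    simp [min_def, max_def, *] <;> linarith


/-- for two points of the Weyl chamber
`0 = t_0 ≤ t_1 ≤ ⋯ ≤ t_{m−1} ≤ t_m = 1` and `0 = s_0 ≤ s_1 ≤ ⋯ ≤ s_{m−1} ≤ s_m = 1`,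
`∑_{i=1}^{m−1} [ (i/(i+1))·min(t_{i+1}, s_{i+1}) − min(t_{i+1}, s_i) − min(t_i, s_{i+1})
  + ((i+1)/i)·min(t_i, s_i) ] = −1/m + ∑_{i=1}^{m} Leb([t_{i−1}, t_i] ∩ [s_{i−1}, s_i])`. -/
theorem stmt10 (m : ℕ) (hm : 2 ≤ m) (t s : ℕ → ℝ)
    (ht0 : t 0 = 0) (htm : t m = 1) (ht : ∀ i < m, t i ≤ t (i + 1))
    (hs0 : s 0 = 0) (hsm : s m = 1) (hs : ∀ i < m, s i ≤ s (i + 1)) :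
    ∑ i ∈ Finset.Icc 1 (m - 1),
        ((i : ℝ) / ((i : ℝ) + 1) * min (t (i + 1)) (s (i + 1)) - min (t (i + 1)) (s i)
          - min (t i) (s (i + 1)) + ((i : ℝ) + 1) / (i : ℝ) * min (t i) (s i)) =
      -1 / m + ∑ i ∈ Finset.Icc 1 m,
        (volume (Set.Icc (t (i - 1)) (t i) ∩ Set.Icc (s (i - 1)) (s i))).toReal := by
  have hR : ∀ i ∈ Finset.Icc 1 m,
      (volume (Set.Icc (t (i - 1)) (t i) ∩ Set.Icc (s (i - 1)) (s i))).toReal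
        = min (t i) (s i) - min (t i) (s (i - 1)) - min (t (i - 1)) (s i)
          + min (t (i - 1)) (s (i - 1)) := by
    intro i hi
    simp only [Finset.mem_Icc] at hi
    have h1 : t (i - 1) ≤ t i := by
      have := ht (i - 1) (by omega); rwa [Nat.sub_add_cancel hi.1] at this
    have h2 : s (i - 1) ≤ s i := by
      have := hs (i - 1) (by omega); rwa [Nat.sub_add_cancel hi.1] at this
    exact vol_eq _ _ _ _ h1 h2
  rw [Finset.sum_congr rfl hR]

  have ht1 : 0 ≤ t 1 := ht0 ▸ ht 0 (by omega)
  have hs1 : 0 ≤ s 1 := hs0 ▸ hs 0 (by omega)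
  rw [← Finset.Ico_add_one_right_eq_Icc, ← Finset.Ico_add_one_right_eq_Icc, Finset.sum_Ico_eq_sum_range,
    Finset.sum_Ico_eq_sum_range]
  simp only [Nat.add_sub_cancel, Nat.add_sub_cancel_left, Nat.succ_sub_one]
  have hL : ∀ j ∈ Finset.range (m - 1),
      (((1 + j : ℕ) : ℝ) / (((1 + j : ℕ) : ℝ) + 1) * min (t (1 + j + 1)) (s (1 + j + 1))
        - min (t (1 + j + 1)) (s (1 + j)) - min (t (1 + j)) (s (1 + j + 1))
        + (((1 + j : ℕ) : ℝ) + 1) / ((1 + j : ℕ) : ℝ) * min (t (1 + j)) (s (1 + j)))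
      = ((min (t (1 + j + 1)) (s (1 + j + 1)) - min (t (1 + j + 1)) (s (1 + j))
          - min (t (1 + j)) (s (1 + j + 1)) + min (t (1 + j)) (s (1 + j)))
        + (min (t (1 + j)) (s (1 + j)) / ((1 + j : ℕ) : ℝ)
          - min (t (1 + j + 1)) (s (1 + j + 1)) / (((1 + j : ℕ) : ℝ) + 1))) := by
    intro j _
    have h0 : ((1 + j : ℕ) : ℝ) ≠ 0 := by positivity
    have h0' : ((1 + j : ℕ) : ℝ) + 1 ≠ 0 := by positivity
    field_simp
    ring
  rw [Finset.sum_congr rfl hL, Finset.sum_add_distrib]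
  have htel : ∑ j ∈ Finset.range (m - 1),
      (min (t (1 + j)) (s (1 + j)) / ((1 + j : ℕ) : ℝ)
        - min (t (1 + j + 1)) (s (1 + j + 1)) / (((1 + j : ℕ) : ℝ) + 1))
      = min (t 1) (s 1) - 1 / m := by
    have := Finset.sum_range_sub' (fun j => min (t (1 + j)) (s (1 + j)) / ((1 + j : ℕ) : ℝ))
      (m - 1)
    rw [Finset.sum_congr rfl (fun j _ => ?_), this]
    · have h1 : 1 + (m - 1) = m := by omega
      rw [h1, htm, hsm]
      norm_num
    · push_cast
      ring_nf
  rw [htel]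
  obtain ⟨k, rfl⟩ : ∃ k, m = k + 1 := ⟨m - 1, by omega⟩
  rw [Finset.sum_range_succ' (fun j => (min (t (1 + j)) (s (1 + j)) - min (t (1 + j)) (s j)
    - min (t j) (s (1 + j)) + min (t j) (s j))) k]
  have e1 : min (t 1) (s 0) = 0 := by rw [hs0]; exact min_eq_right ht1
  have e2 : min (t 0) (s 1) = 0 := by rw [ht0]; exact min_eq_left hs1
  have e3 : min (t 0) (s 0) = 0 := by rw [ht0, hs0]; simp
  simp only [e1, e2, e3]
  have hk : k + 1 - 1 = k := rfl
  rw [hk]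
  rw [show (∑ j ∈ Finset.range k, (min (t (1 + (j + 1))) (s (1 + (j + 1)))
      - min (t (1 + (j + 1))) (s (j + 1)) - min (t (j + 1)) (s (1 + (j + 1)))
      + min (t (j + 1)) (s (j + 1))))
    = ∑ j ∈ Finset.range k, (min (t (1 + j + 1)) (s (1 + j + 1))
      - min (t (1 + j + 1)) (s (1 + j)) - min (t (1 + j)) (s (1 + j + 1))
      + min (t (1 + j)) (s (1 + j))) from Finset.sum_congr rfl fun j _ => by rw [Nat.add_comm 1 j, Nat.add_comm 1 (j+1)]]
  ring
end

section
/- Let m ≥ 2 and let f^1, …, f^m : [0,1] → ℝ be bounded functions with f^i(0) = 0 for every i. Define D := sup over 0 = t_0 ≤ t_1 ≤ ⋯ ≤ t_{m−1} ≤ t_m = 1 of ∑_{i=1}^{m} (f^i(t_i) − f^i(t_{i−1})), and define H := −(1/m) ∑_{i=1}^{m−1} i·(f^i(1) − f^{i+1}(1)) + sup over 0 ≤ t_1 ≤ ⋯ ≤ t_{m−1} ≤ 1 of ∑_{i=1}^{m−1} (f^i(t_i) − f^{i+1}(t_i)). Then D = (1/m) ∑_{i=1}^{m} f^i(1) + H.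 (This is the pathwise form of the identity D_m = Z_m + H_m between the Glynn–Whitt functional D_m, the normal variable Z_m = (1/m)∑_{i=1}^m B^i(1), and the functional H_m, valid almost surely when f^i = B^i are the paths of a standard m-dimensional Brownian motion.) -/
private lemma stmt11_tele (g : ℕ → ℝ) (k : ℕ) :
    ∑ i ∈ Finset.Icc 1 k, (i : ℝ) * (g i - g (i + 1)) =
      ∑ i ∈ Finset.Icc 1 (k + 1), g i - (k + 1 : ℝ) * g (k + 1) := by
  induction k with
  | zero => simp
  | succ k ih =>
    rw [Finset.sum_Icc_succ_top (by omega : 1 ≤ k + 1), ih,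
      Finset.sum_Icc_succ_top (by omega : 1 ≤ k + 2)]
    push_cast
    ring

private lemma stmt11_shift (f : ℕ → ℝ → ℝ) (t : ℕ → ℝ) (m : ℕ) (hm : 1 ≤ m)
    (h0 : f 1 (t 0) = 0) (htm : t m = 1) :
    ∑ i ∈ Finset.Icc 1 m, (f i (t i) - f i (t (i - 1))) =
      f m 1 + ∑ i ∈ Finset.Icc 1 (m - 1), (f i (t i) - f (i + 1) (t i)) := by
  have e1 : ∀ g : ℕ → ℝ, ∀ n : ℕ, ∑ i ∈ Finset.Icc 1 n, g i = ∑ i ∈ Finset.range n, g (i + 1) := by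
    intro g n
    induction n with
    | zero => simp
    | succ n ih => rw [Finset.sum_Icc_succ_top (by omega), Finset.sum_range_succ, ih]
  rw [e1, e1]
  simp only [Nat.add_sub_cancel]
  obtain ⟨k, rfl⟩ : ∃ k, m = k + 1 := ⟨m - 1, by omega⟩
  simp only [Nat.add_sub_cancel]
  set A : ℕ → ℝ := fun i => f (i + 1) (t (i + 1)) with hA
  set B : ℕ → ℝ := fun i => f (i + 1) (t i) with hB
  have lhs : ∑ i ∈ Finset.range (k + 1), (f (i + 1) (t (i + 1)) - f (i + 1) (t i))
      = ∑ i ∈ Finset.range (k + 1), (A i - B i) := rfl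
  rw [lhs, Finset.sum_sub_distrib, Finset.sum_range_succ A, Finset.sum_range_succ' B]
  have rhs : ∑ i ∈ Finset.range k, (f (i + 1) (t (i + 1)) - f (i + 1 + 1) (t (i + 1)))
      = ∑ i ∈ Finset.range k, (A i - B (i + 1)) := rfl
  rw [rhs, Finset.sum_sub_distrib]
  have hAk : A k = f (k + 1) 1 := by simp [hA, htm]
  have hB0 : B 0 = 0 := h0
  rw [hAk, hB0]
  ring

/-- the pathwise identity `D = (1/m)∑_{i=1}^m f^i(1) + H` between the
Glynn–Whitt functional `D` and the functional `H`, for bounded paths vanishing at `0`. -/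
theorem stmt11 (m : ℕ) (hm : 2 ≤ m) (f : ℕ → ℝ → ℝ)
    (hf0 : ∀ i, f i 0 = 0)
    (hbd : ∀ i, ∃ C : ℝ, ∀ u ∈ Set.Icc (0 : ℝ) 1, |f i u| ≤ C) :
    sSup {v : ℝ | ∃ t : ℕ → ℝ, t 0 = 0 ∧ t m = 1 ∧ (∀ i < m, t i ≤ t (i + 1)) ∧
        v = ∑ i ∈ Finset.Icc 1 m, (f i (t i) - f i (t (i - 1)))} =
      (1 / m) * ∑ i ∈ Finset.Icc 1 m, f i 1 +
        (-(1 / m) * ∑ i ∈ Finset.Icc 1 (m - 1), (i : ℝ) * (f i 1 - f (i + 1) 1) +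
          sSup {v : ℝ | ∃ t : ℕ → ℝ, 0 ≤ t 1 ∧ t (m - 1) ≤ 1 ∧
            (∀ i, 1 ≤ i → i < m - 1 → t i ≤ t (i + 1)) ∧
            v = ∑ i ∈ Finset.Icc 1 (m - 1), (f i (t i) - f (i + 1) (t i))}) := by
  choose C hC using hbd
  set S : Set ℝ := {v : ℝ | ∃ t : ℕ → ℝ, 0 ≤ t 1 ∧ t (m - 1) ≤ 1 ∧
      (∀ i, 1 ≤ i → i < m - 1 → t i ≤ t (i + 1)) ∧
      v = ∑ i ∈ Finset.Icc 1 (m - 1), (f i (t i) - f (i + 1) (t i))} with hS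
  have hSne : S.Nonempty := by
    refine ⟨0, fun _ => 0, le_refl 0, zero_le_one, fun i _ _ => le_rfl, ?_⟩
    simp [hf0]
  have hSbd : BddAbove S := by
    refine ⟨∑ i ∈ Finset.Icc 1 (m - 1), (C i + C (i + 1)), ?_⟩
    rintro v ⟨t, ht1, htm1, hmono, rfl⟩
    have hle : ∀ i j, 1 ≤ i → i ≤ j → j ≤ m - 1 → t i ≤ t j := by
      intro i j h1 hij hj
      induction j, hij using Nat.le_induction with
      | base => exact le_rfl
      | succ j hij ih =>
        exact le_trans (ih (by omega)) (hmono j (by omega) (by omega))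
    refine Finset.sum_le_sum ?_
    intro i hi
    rw [Finset.mem_Icc] at hi
    have hti : t i ∈ Set.Icc (0 : ℝ) 1 := by
      constructor
      · exact le_trans ht1 (hle 1 i le_rfl hi.1 hi.2)
      · exact le_trans (hle i (m - 1) hi.1 hi.2 le_rfl) htm1
    have h1 := hC i (t i) hti
    have h2 := hC (i + 1) (t i) hti
    have := abs_le.mp h1
    have := abs_le.mp h2
    linarith [(abs_le.mp h1).2, (abs_le.mp h2).1]
  have hset : {v : ℝ | ∃ t : ℕ → ℝ, t 0 = 0 ∧ t m = 1 ∧ (∀ i < m, t i ≤ t (i + 1)) ∧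
      v = ∑ i ∈ Finset.Icc 1 m, (f i (t i) - f i (t (i - 1)))}
      = (fun x => f m 1 + x) '' S := by
    ext v
    constructor
    · rintro ⟨t, ht0, htm, hmono, rfl⟩
      refine ⟨∑ i ∈ Finset.Icc 1 (m - 1), (f i (t i) - f (i + 1) (t i)), ?_, ?_⟩
      · refine ⟨t, ?_, ?_, ?_, rfl⟩
        · rw [← ht0]; exact hmono 0 (by omega)
        · have := hmono (m - 1) (by omega)
          rwa [(by omega : m - 1 + 1 = m), htm] at this
        · intro i _ hi; exact hmono i (by omega)
      · exact (stmt11_shift f t m (by omega) (by rw [ht0, hf0]) htm).symm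
    · rintro ⟨w, ⟨t, ht1, htm1, hmono, rfl⟩, rfl⟩
      set t' : ℕ → ℝ := fun i => if i = 0 then 0 else if i ≤ m - 1 then t i else 1 with ht'
      have ht'0 : t' 0 = 0 := by simp [ht']
      have ht'm : t' m = 1 := by
        simp only [ht']
        rw [if_neg (by omega), if_neg (by omega)]
      have ht'eq : ∀ i ∈ Finset.Icc 1 (m - 1), t' i = t i := by
        intro i hi
        rw [Finset.mem_Icc] at hi
        simp only [ht']
        rw [if_neg (by omega), if_pos hi.2]
      have ht'eq' : ∀ i, i ≠ 0 → i ≤ m - 1 → t' i = t i := by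
        intro i h1 h2
        simp only [ht']
        rw [if_neg h1, if_pos h2]
      refine ⟨t', ht'0, ht'm, ?_, ?_⟩
      · intro i hi
        rcases Nat.eq_zero_or_pos i with h0 | h1
        · subst h0
          rw [ht'0, ht'eq' 1 one_ne_zero (by omega)]
          exact ht1
        · rcases lt_or_ge i (m - 1) with h2 | h2
          · rw [ht'eq' i (by omega) (by omega), ht'eq' (i + 1) (by omega) (by omega)]
            exact hmono i h1 h2
          · have hi' : i = m - 1 := by omega
            subst hi'
            rw [ht'eq' (m - 1) (by omega) le_rfl, (by omega : m - 1 + 1 = m), ht'm]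
            exact htm1
      · rw [stmt11_shift f t' m (by omega) (by rw [ht'0, hf0]) ht'm]
        congr 1
        refine Finset.sum_congr rfl ?_
        intro i hi
        rw [ht'eq i hi]
  have him : (fun x => f m 1 + x) '' S = ⇑(OrderIso.addLeft (f m 1)) '' S := by
    ext x; simp
  rw [hset, him, ← (OrderIso.addLeft (f m 1)).map_csSup' hSne hSbd, OrderIso.addLeft_apply]
  have htel : ∑ i ∈ Finset.Icc 1 (m - 1), (i : ℝ) * (f i 1 - f (i + 1) 1)
      = ∑ i ∈ Finset.Icc 1 m, f i 1 - (m : ℝ) * f m 1 := by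
    have := stmt11_tele (fun i => f i 1) (m - 1)
    rw [(by omega : m - 1 + 1 = m)] at this
    rw [this]
    have : ((m - 1 : ℕ) : ℝ) + 1 = (m : ℝ) := by
      push_cast [Nat.cast_sub (by omega : 1 ≤ m)]; ring
    rw [this]
  rw [htel]
  have hm0 : (m : ℝ) ≠ 0 := by positivity
  field_simp
  ring
end
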